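/- There exists an absolute constant c > 0 such that the following holds. Let k ≥ d and d ≤ n ≤ c d². Suppose labels are generated by a planted model y_i = Σ_{ℓ=1}^k v*_ℓ (⟨w*_ℓ, x_i⟩)² with W* ∈ R^{k×d} satisfying σ_min(W*) > 0 and v* ∈ R^k whose nonzero entries all have the same sign; let v ∈ R^k be a vector whose nonzero entries have that same sign with at least d entries strictly nonzero. Then for Lebesgue-almost every data matrix X = (x_1,…,x_n) ∈ R^{d×n}, the loss L(W) = (1/(2n)) Σ_{i=1}^n (x_i^T W^T diag(v) W x_i − y_i)² satisfies: every W with ∇L(W) = 0 and ∇²L(W) ⪰ 0 is a global minimizer with L(W) = 0. Consequently all local minima are global, all saddle points have a direction of strictly negative curvature, and the global optimum value is zero. -/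

import Mathlib

open MeasureTheory ProbabilityTheory Matrix Real

noncomputable section

/-- Euclidean norm of a vector. -/
def euclNorm {n : Type*} [Fintype n] (x : n → ℝ) : ℝ :=
  Real.sqrt (∑ i, x i ^ 2)

/-- Maximum singular value (operator norm) of a matrix. -/
def sigmaMax {m n : Type*} [Fintype m] [Fintype n] (A : Matrix m n ℝ) : ℝ :=
  sSup ((fun x => euclNorm (A.mulVec x)) '' {x : n → ℝ | euclNorm x = 1})

/-- Minimum singular value of a matrix. -/
def sigmaMin {m n : Type*} [Fintype m] [Fintype n] (A : Matrix m n ℝ) : ℝ :=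
  sInf ((fun x => euclNorm (A.mulVec x)) '' {x : n → ℝ | euclNorm x = 1})

/-- Frobenius norm of a matrix. -/
def frobNorm {m n : Type*} [Fintype m] [Fintype n] (A : Matrix m n ℝ) : ℝ :=
  Real.sqrt (∑ i, ∑ j, A i j ^ 2)

/-- Square root of a positive semidefinite matrix (removed from Mathlib; old definition). -/
def Matrix.PosSemidef.sqrt {n : Type*} [Fintype n] [DecidableEq n]
    {A : Matrix n n ℝ} (hA : A.PosSemidef) : Matrix n n ℝ :=
  hA.1.eigenvectorUnitary.1 * Matrix.diagonal (Real.sqrt ∘ hA.1.eigenvalues) *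
    (star hA.1.eigenvectorUnitary : Matrix n n ℝ)

/-- Nuclear norm of a matrix: the trace of `sqrt (Aᵀ A)`, i.e. the sum of singular values. -/
def nuclearNorm {m n : Type*} [Fintype m] [Fintype n] [DecidableEq n]
    (A : Matrix m n ℝ) : ℝ :=
  (Matrix.posSemidef_conjTranspose_mul_self A).sqrt.trace

/-- Khatri-Rao product: columnwise Kronecker product. -/
def khatriRao {m n p : Type*} (A : Matrix m p ℝ) (B : Matrix n p ℝ) : Matrix (m × n) p ℝ :=
  Matrix.of fun ij l => A ij.1 l * B ij.2 l

/-- Standard Gaussian measure `N(0, I_d)` on `ℝ^d`. -/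
def stdGaussian (d : ℕ) : Measure (Fin d → ℝ) :=
  Measure.pi fun _ => gaussianReal 0 1

attribute [local instance] Matrix.frobeniusNormedAddCommGroup Matrix.frobeniusNormedSpace

section Aux
open Filter Topology Matrix
variable {d k n : ℕ} {E : Type*} [NormedAddCommGroup E] [NormedSpace ℝ E]

lemma quartic_hasDerivAt (a0 a1 a2 a3 a4 t : ℝ) :
    HasDerivAt (fun t : ℝ => a0 + a1*t + a2*t^2 + a3*t^3 + a4*t^4)
      (a1 + 2*a2*t + 3*a3*t^2 + 4*a4*t^3) t := by
  have h : HasDerivAt (fun t : ℝ => a0 + a1*t + a2*t^2 + a3*t^3 + a4*t^4)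
      (0 + a1*1 + a2*(2*t^1) + a3*(3*t^2) + a4*(4*t^3)) t := by
    exact ((((hasDerivAt_const t a0).add ((hasDerivAt_id t).const_mul a1)).add
      ((hasDerivAt_pow 2 t).const_mul a2)).add ((hasDerivAt_pow 3 t).const_mul a3)).add
      ((hasDerivAt_pow 4 t).const_mul a4)
  convert h using 1; ring

lemma quartic_localmin {a0 a1 a2 a3 a4 : ℝ}
    (h : IsLocalMin (fun t : ℝ => a0 + a1*t + a2*t^2 + a3*t^3 + a4*t^4) 0) :
    a1 = 0 ∧ 0 ≤ a2 := by
  have h1 : a1 = 0 := by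
    have := h.deriv_eq_zero
    rw [(quartic_hasDerivAt a0 a1 a2 a3 a4 0).deriv] at this
    linarith [this]
  refine ⟨h1, ?_⟩
  by_contra h2
  push_neg at h2
  have hc : Continuous fun t : ℝ => a2 + a3*t + a4*t^2 := by continuity
  have ht : Filter.Tendsto (fun t : ℝ => a2 + a3*t + a4*t^2) (𝓝 0) (𝓝 a2) := by
    have := hc.tendsto 0
    simpa using this
  have ev1 : ∀ᶠ t in 𝓝 (0:ℝ), a2 + a3*t + a4*t^2 < 0 :=
    ht.eventually (eventually_lt_nhds h2)
  have ev2 : ∀ᶠ t in 𝓝 (0:ℝ), a0 + a1*0 + a2*0^2 + a3*0^3 + a4*0^4 ≤ a0 + a1*t + a2*t^2 + a3*t^3 + a4*t^4 := h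
  have ev3 : ∀ᶠ t in 𝓝[≠] (0:ℝ),
      (a2 + a3*t + a4*t^2 < 0 ∧ a0 + a1*0 + a2*0^2 + a3*0^3 + a4*0^4 ≤ a0 + a1*t + a2*t^2 + a3*t^3 + a4*t^4) :=
    (ev1.and ev2).filter_mono nhdsWithin_le_nhds
  obtain ⟨t, ⟨hlt, hge⟩, ht0⟩ := (ev3.and eventually_mem_nhdsWithin).exists
  have ht0' : t ≠ 0 := by simpa using ht0
  have htsq : 0 < t^2 := by positivity
  rw [h1] at hge
  nlinarith [hge, hlt, htsq]


lemma line_hasDerivAt (W U : E) (t₀ : ℝ) : HasDerivAt (fun t : ℝ => W + t • U) U t₀ := by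
  simpa using ((hasDerivAt_id t₀).smul_const U).const_add W

lemma dir_hasDerivAt (f : E → ℝ) (hf : ContDiff ℝ (⊤ : ℕ∞) f) (W U : E) (t₀ : ℝ) :
    HasDerivAt (fun t : ℝ => f (W + t • U)) (fderiv ℝ f (W + t₀ • U) U) t₀ :=
  ((hf.differentiable (by simp) (W + t₀ • U)).hasFDerivAt).comp_hasDerivAt t₀ (line_hasDerivAt W U t₀)

lemma bridge (f : E → ℝ) (hf : ContDiff ℝ (⊤ : ℕ∞) f) (W U : E) (c0 c1 c2 c3 c4 : ℝ)
    (hexp : ∀ t : ℝ, f (W + t • U) = c0 + c1*t + c2*t^2 + c3*t^3 + c4*t^4) :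
    fderiv ℝ f W U = c1 ∧ iteratedFDeriv ℝ 2 f W ![U, U] = 2*c2 := by
  have hφpoly : (fun t : ℝ => f (W + t • U)) = fun t => c0 + c1*t + c2*t^2 + c3*t^3 + c4*t^4 :=
    funext hexp
  have hd1 : ∀ s : ℝ, fderiv ℝ f (W + s • U) U = c1 + 2*c2*s + 3*c3*s^2 + 4*c4*s^3 := by
    intro s
    have h1 := dir_hasDerivAt f hf W U s
    have h2 : HasDerivAt (fun t : ℝ => f (W + t • U)) (c1 + 2*c2*s + 3*c3*s^2 + 4*c4*s^3) s := by
      rw [hφpoly]; exact quartic_hasDerivAt c0 c1 c2 c3 c4 s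
    exact h1.unique h2
  constructor
  · have := hd1 0
    simpa using this
  · set g : E → ℝ := fun W' => (fderiv ℝ f W') U with hgdef
    have hfd : ContDiff ℝ (⊤ : ℕ∞) (fderiv ℝ f) := hf.fderiv_right (mod_cast le_top)
    have hg_diff : Differentiable ℝ g :=
      ((ContinuousLinearMap.apply ℝ ℝ U).differentiable).comp (hfd.differentiable (by simp))
    have hgline : HasDerivAt (fun t : ℝ => g (W + t • U)) (fderiv ℝ g (W + (0:ℝ) • U) U) 0 :=
      ((hg_diff _).hasFDerivAt).comp_hasDerivAt 0 (line_hasDerivAt W U 0)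
    simp only [zero_smul, add_zero] at hgline
    have hgpoly : (fun t : ℝ => g (W + t • U))
        = fun t => c1 + (2*c2)*t + (3*c3)*t^2 + (4*c4)*t^3 + 0*t^4 := by
      funext t
      simpa using hd1 t
    have hg2 : HasDerivAt (fun t : ℝ => g (W + t • U)) (2*c2) 0 := by
      rw [hgpoly]
      have := quartic_hasDerivAt c1 (2*c2) (3*c3) (4*c4) 0 0
      simpa using this
    have hval : fderiv ℝ g W U = 2*c2 := hgline.unique hg2
    rw [iteratedFDeriv_two_apply]
    have hcomp : fderiv ℝ g W = (ContinuousLinearMap.apply ℝ ℝ U).comp (fderiv ℝ (fderiv ℝ f) W) := by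
      have h := fderiv_comp (𝕜 := ℝ) (x := W) (ContinuousLinearMap.apply ℝ ℝ U).differentiableAt
        ((hfd.differentiable (by simp)) W)
      rw [ContinuousLinearMap.fderiv] at h
      exact h
    have hkey : fderiv ℝ g W U = fderiv ℝ (fderiv ℝ f) W U U := by rw [hcomp]; rfl
    simp only [Matrix.cons_val_zero, Matrix.cons_val_one, Matrix.head_cons]
    rw [← hkey, hval]



lemma mulVec_eq (W : Matrix (Fin k) (Fin d) ℝ) (x : Fin d → ℝ) (l : Fin k) :
    W.mulVec x l = ∑ j, W l j * x j := rfl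

lemma core (X : Fin n → Fin d → ℝ) (v vstar : Fin k → ℝ)
    (Wstar : Matrix (Fin k) (Fin d) ℝ)
    (hv : ∀ l, 0 ≤ v l) (hvs : ∀ l, 0 ≤ vstar l)
    (hcard : d ≤ (Finset.univ.filter fun l => v l ≠ 0).card)
    (W : Matrix (Fin k) (Fin d) ℝ)
    (r : Fin n → ℝ)
    (hr : ∀ i, r i = (∑ l, v l * (W.mulVec (X i) l)^2)
        - ∑ l, vstar l * (Wstar.mulVec (X i) l)^2)
    (hC1 : ∀ U : Matrix (Fin k) (Fin d) ℝ,
      ∑ i, r i * (∑ l, v l * W.mulVec (X i) l * U.mulVec (X i) l) = 0)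
    (hC2 : ∀ U : Matrix (Fin k) (Fin d) ℝ,
      0 ≤ ∑ i, (2 * (∑ l, v l * W.mulVec (X i) l * U.mulVec (X i) l)^2
            + r i * (∑ l, v l * (U.mulVec (X i) l)^2))) :
    ∀ i, r i = 0 := by
  classical
  -- Step 1: stationarity rows
  have st : ∀ l : Fin k, v l ≠ 0 → ∀ j : Fin d,
      ∑ i, r i * (W.mulVec (X i) l * X i j) = 0 := by
    intro l hl j
    set U : Matrix (Fin k) (Fin d) ℝ :=
      Matrix.of (fun l' j' => (if l' = l then 1 else 0) * (if j' = j then 1 else 0)) with hU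
    have hUmv : ∀ i l', U.mulVec (X i) l' = (if l' = l then 1 else 0) * X i j := by
      intro i l'
      rw [mulVec_eq]
      simp [hU, ite_mul, mul_comm]
    have h := hC1 U
    have hinner : ∀ i, (∑ l', v l' * W.mulVec (X i) l' * U.mulVec (X i) l')
        = v l * (W.mulVec (X i) l * X i j) := by
      intro i
      rw [Finset.sum_eq_single l]
      · rw [hUmv]; simp [mul_assoc]
      · intro b _ hb; rw [hUmv]; simp [hb]
      · intro hb; exact absurd (Finset.mem_univ l) hb
    rw [Finset.sum_congr rfl (fun i _ => by rw [hinner i])] at h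
    have h2 : v l * ∑ i, r i * (W.mulVec (X i) l * X i j) = 0 := by
      rw [Finset.mul_sum]; rw [← h]; congr 1; funext i; ring
    exact (mul_eq_zero.mp h2).resolve_left hl
  -- Step 1a
  have st2 : ∀ l : Fin k, v l ≠ 0 → ∑ i, r i * (W.mulVec (X i) l)^2 = 0 := by
    intro l hl
    have h : ∑ j, W l j * (∑ i, r i * (W.mulVec (X i) l * X i j)) = 0 := by
      rw [Finset.sum_congr rfl (fun j _ => by rw [st l hl j, mul_zero])]
      simp
    have expand : ∀ i, r i * (W.mulVec (X i) l)^2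
        = ∑ j, W l j * (r i * (W.mulVec (X i) l * X i j)) := by
      intro i
      have h1 : ∑ j, W l j * (r i * (W.mulVec (X i) l * X i j))
          = (r i * W.mulVec (X i) l) * ∑ j, W l j * X i j := by
        rw [Finset.mul_sum]; exact Finset.sum_congr rfl fun j _ => by ring
      rw [h1, ← mulVec_eq]; ring
    calc ∑ i, r i * (W.mulVec (X i) l)^2
        = ∑ i, ∑ j, W l j * (r i * (W.mulVec (X i) l * X i j)) :=
          Finset.sum_congr rfl fun i _ => expand i
      _ = ∑ j, ∑ i, W l j * (r i * (W.mulVec (X i) l * X i j)) := Finset.sum_comm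
      _ = ∑ j, W l j * ∑ i, r i * (W.mulVec (X i) l * X i j) :=
          Finset.sum_congr rfl fun j _ => (Finset.mul_sum _ _ _).symm
      _ = 0 := h
  -- choose subset of size d inside the support of v
  obtain ⟨t, hts, htc⟩ := Finset.exists_subset_card_eq hcard
  let e : Fin d → Fin k := fun p => ((t.orderIsoOfFin htc) p : Fin k)
  have he_inj : Function.Injective e := fun p q h =>
    (t.orderIsoOfFin htc).injective (Subtype.ext h)
  have he_mem : ∀ p, v (e p) ≠ 0 := by
    intro p
    have h1 : (e p) ∈ t := ((t.orderIsoOfFin htc) p).2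
    have h2 := hts h1
    simpa using (Finset.mem_filter.mp h2).2
  set B : Matrix (Fin d) (Fin d) ℝ := Matrix.of (fun p j => v (e p) * W (e p) j) with hB
  have hG : ∀ a : Fin d → ℝ, 0 ≤ ∑ i, r i * (∑ j, a j * X i j)^2 := by
    intro a
    by_cases hdet : B.det = 0
    · -- degenerate case: kernel vector
      obtain ⟨z', hz0, hz⟩ := (Matrix.exists_mulVec_eq_zero_iff (M := Bᵀ)).mpr
        (by rwa [Matrix.det_transpose])
      set z : Fin k → ℝ := fun l => ∑ p, if e p = l then z' p else 0 with hzdef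
      have hze : ∀ p, z (e p) = z' p := by
        intro p
        show (∑ q, if e q = e p then z' q else 0) = z' p
        rw [Finset.sum_eq_single p]
        · simp
        · intro q _ hq; simp [he_inj.ne hq]
        · intro h; exact absurd (Finset.mem_univ p) h
      have hz_out : ∀ l, (∀ p, e p ≠ l) → z l = 0 := by
        intro l hl
        rw [hzdef]
        exact Finset.sum_eq_zero fun p _ => by simp [hl p]
      have hinner0 : ∀ j, ∑ l, z l * (v l * W l j) = 0 := by
        intro j
        have h1 : ∑ l, z l * (v l * W l j) = ∑ p, z' p * (v (e p) * W (e p) j) := by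
          rw [hzdef]
          calc ∑ l, (∑ p, if e p = l then z' p else 0) * (v l * W l j)
              = ∑ l, ∑ p, (if e p = l then z' p else 0) * (v l * W l j) :=
                Finset.sum_congr rfl fun l _ => Finset.sum_mul _ _ _
            _ = ∑ p, ∑ l, (if e p = l then z' p else 0) * (v l * W l j) := Finset.sum_comm
            _ = ∑ p, z' p * (v (e p) * W (e p) j) := Finset.sum_congr rfl fun p _ => by
                rw [Finset.sum_eq_single (e p)]
                · simp
                · intro b _ hb; simp [Ne.symm hb]
                · intro h; exact absurd (Finset.mem_univ _) h
        rw [h1]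
        have h2 := congrFun hz j
        have h3 : Bᵀ.mulVec z' j = ∑ p, z' p * (v (e p) * W (e p) j) := by
          rw [mulVec_eq]
          exact Finset.sum_congr rfl fun p _ => by
            rw [Matrix.transpose_apply]; simp only [hB, Matrix.of_apply]; ring
        rw [← h3, h2]
        rfl
      set U : Matrix (Fin k) (Fin d) ℝ := Matrix.of (fun l j' => z l * a j') with hUd
      have hUmv : ∀ i l', U.mulVec (X i) l' = z l' * ∑ j, a j * X i j := by
        intro i l'
        rw [mulVec_eq, Finset.mul_sum]
        exact Finset.sum_congr rfl fun j _ => by simp only [hUd, Matrix.of_apply]; ring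
      have hα : ∀ i, ∑ l, v l * W.mulVec (X i) l * U.mulVec (X i) l = 0 := by
        intro i
        have h1 : ∑ l, v l * W.mulVec (X i) l * U.mulVec (X i) l
            = (∑ j, a j * X i j) * ∑ l, z l * (v l * W.mulVec (X i) l) := by
          rw [Finset.mul_sum]
          exact Finset.sum_congr rfl fun l _ => by rw [hUmv]; ring
        have h2 : ∑ l, z l * (v l * W.mulVec (X i) l) = 0 := by
          calc ∑ l, z l * (v l * W.mulVec (X i) l)
              = ∑ l, ∑ j, X i j * (z l * (v l * W l j)) := by
                refine Finset.sum_congr rfl fun l _ => ?_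
                rw [mulVec_eq]
                rw [show v l * ∑ j, W l j * X i j = ∑ j, v l * (W l j * X i j) from Finset.mul_sum _ _ _]
                rw [Finset.mul_sum]
                exact Finset.sum_congr rfl fun j _ => by ring
            _ = ∑ j, ∑ l, X i j * (z l * (v l * W l j)) := Finset.sum_comm
            _ = ∑ j, X i j * ∑ l, z l * (v l * W l j) :=
                Finset.sum_congr rfl fun j _ => (Finset.mul_sum _ _ _).symm
            _ = 0 := by
                refine Finset.sum_eq_zero fun j _ => ?_
                rw [hinner0 j, mul_zero]
        rw [h1, h2, mul_zero]
      have hzsum : ∑ l, v l * z l^2 = ∑ p, v (e p) * z' p^2 := by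
        have hall : ∑ l, v l * z l^2 = ∑ l ∈ Finset.image e Finset.univ, v l * z l^2 := by
          refine (Finset.sum_subset (Finset.subset_univ _) fun l _ hl => ?_).symm
          have : ∀ p, e p ≠ l := by
            intro p hp
            exact hl (Finset.mem_image.mpr ⟨p, Finset.mem_univ p, hp⟩)
          rw [hz_out l this]; ring
        have himg : ∑ l ∈ Finset.image e Finset.univ, v l * z l^2
            = ∑ p, v (e p) * z (e p)^2 := Finset.sum_image fun x _ y _ h => he_inj h
        rw [hall, himg]
        exact Finset.sum_congr rfl fun p _ => by rw [hze p]
      have hβ : ∀ i, ∑ l, v l * (U.mulVec (X i) l)^2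
          = (∑ p, v (e p) * z' p^2) * (∑ j, a j * X i j)^2 := by
        intro i
        rw [← hzsum, Finset.sum_mul]
        exact Finset.sum_congr rfl fun l _ => by rw [hUmv]; ring
      have hS : 0 < ∑ p, v (e p) * z' p^2 := by
        obtain ⟨p0, hp0⟩ : ∃ p, z' p ≠ 0 := by
          by_contra hc
          push_neg at hc
          exact hz0 (funext hc)
        refine Finset.sum_pos' (fun p _ => mul_nonneg (hv _) (sq_nonneg _)) ⟨p0, Finset.mem_univ _, ?_⟩
        have hvp : 0 < v (e p0) := lt_of_le_of_ne (hv _) (Ne.symm (he_mem p0))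
        positivity
      have h := hC2 U
      have heq : ∑ i, (2 * (∑ l, v l * W.mulVec (X i) l * U.mulVec (X i) l)^2
            + r i * (∑ l, v l * (U.mulVec (X i) l)^2))
          = (∑ p, v (e p) * z' p^2) * ∑ i, r i * (∑ j, a j * X i j)^2 := by
        rw [Finset.mul_sum]
        refine Finset.sum_congr rfl fun i _ => ?_
        rw [hα i, hβ i]; ring
      rw [heq] at h
      nlinarith [h, hS]
    · -- invertible case : full cancellation
      have hBinv : IsUnit Bᵀ.det := by
        rw [Matrix.det_transpose]; exact Ne.isUnit hdet
      have hG0 : ∀ jj j' : Fin d, ∑ i, r i * (X i jj * X i j') = 0 := by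
        intro jj j'
        set z' : Fin d → ℝ := Bᵀ⁻¹.mulVec (Pi.single jj 1) with hz'
        have hsolve : Bᵀ.mulVec z' = Pi.single jj 1 := by
          rw [hz', Matrix.mulVec_mulVec, Matrix.mul_nonsing_inv _ hBinv, Matrix.one_mulVec]
        have hXjj : ∀ i, X i jj = ∑ p, z' p * (v (e p) * W.mulVec (X i) (e p)) := by
          intro i
          have h1 : ∑ m, (Bᵀ.mulVec z') m * X i m
              = ∑ m, (Pi.single jj 1 : Fin d → ℝ) m * X i m := by rw [hsolve]
          have h2 : ∑ m, (Pi.single jj 1 : Fin d → ℝ) m * X i m = X i jj := by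
            rw [Finset.sum_eq_single jj]
            · simp
            · intro b _ hb; simp [Pi.single_apply, hb]
            · intro h; exact absurd (Finset.mem_univ _) h
          have h3 : ∑ m, (Bᵀ.mulVec z') m * X i m
              = ∑ p, z' p * (v (e p) * W.mulVec (X i) (e p)) := by
            calc ∑ m, (Bᵀ.mulVec z') m * X i m
                = ∑ m, ∑ p, z' p * (v (e p) * (W (e p) m * X i m)) := by
                  refine Finset.sum_congr rfl fun m _ => ?_
                  rw [mulVec_eq, Finset.sum_mul]
                  refine Finset.sum_congr rfl fun p _ => ?_
                  rw [Matrix.transpose_apply]; simp only [hB, Matrix.of_apply]; ring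
              _ = ∑ p, ∑ m, z' p * (v (e p) * (W (e p) m * X i m)) := Finset.sum_comm
              _ = ∑ p, z' p * (v (e p) * W.mulVec (X i) (e p)) := by
                  refine Finset.sum_congr rfl fun p _ => ?_
                  simp only [mulVec_eq, Finset.mul_sum]
          rw [← h2, ← h1, h3]
        calc ∑ i, r i * (X i jj * X i j')
            = ∑ i, ∑ p, z' p * (v (e p) * (r i * (W.mulVec (X i) (e p) * X i j'))) := by
              refine Finset.sum_congr rfl fun i _ => ?_
              rw [hXjj i]
              simp only [Finset.sum_mul, Finset.mul_sum]
              exact Finset.sum_congr rfl fun p _ => by ring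
          _ = ∑ p, ∑ i, z' p * (v (e p) * (r i * (W.mulVec (X i) (e p) * X i j'))) :=
              Finset.sum_comm
          _ = 0 := by
              refine Finset.sum_eq_zero fun p _ => ?_
              have h4 : ∑ i, z' p * (v (e p) * (r i * (W.mulVec (X i) (e p) * X i j')))
                  = z' p * v (e p) * ∑ i, r i * (W.mulVec (X i) (e p) * X i j') := by
                rw [Finset.mul_sum]
                exact Finset.sum_congr rfl fun i _ => by ring
              rw [h4, st (e p) (he_mem p) j', mul_zero]
      have : ∑ i, r i * (∑ j, a j * X i j)^2 = 0 := by
        calc ∑ i, r i * (∑ j, a j * X i j)^2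
            = ∑ i, ∑ jj, ∑ j', a jj * a j' * (r i * (X i jj * X i j')) := by
              refine Finset.sum_congr rfl fun i _ => ?_
              rw [sq, Finset.sum_mul_sum]
              rw [Finset.mul_sum]
              refine Finset.sum_congr rfl fun jj _ => ?_
              rw [Finset.mul_sum]
              exact Finset.sum_congr rfl fun j' _ => by ring
          _ = ∑ jj, ∑ j', a jj * a j' * ∑ i, r i * (X i jj * X i j') := by
              rw [Finset.sum_comm]
              refine Finset.sum_congr rfl fun jj _ => ?_
              rw [Finset.sum_comm]
              exact Finset.sum_congr rfl fun j' _ => (Finset.mul_sum _ _ _).symm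
          _ = 0 := by
              refine Finset.sum_eq_zero fun jj _ => Finset.sum_eq_zero fun j' _ => ?_
              rw [hG0 jj j', mul_zero]
      rw [this]
  -- final step
  have hT1 : ∑ i, r i * (∑ l, v l * (W.mulVec (X i) l)^2) = 0 := by
    calc ∑ i, r i * (∑ l, v l * (W.mulVec (X i) l)^2)
        = ∑ i, ∑ l, v l * (r i * (W.mulVec (X i) l)^2) := by
          refine Finset.sum_congr rfl fun i _ => ?_
          rw [Finset.mul_sum]
          exact Finset.sum_congr rfl fun l _ => by ring
      _ = ∑ l, ∑ i, v l * (r i * (W.mulVec (X i) l)^2) := Finset.sum_comm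
      _ = 0 := by
          refine Finset.sum_eq_zero fun l _ => ?_
          by_cases hl : v l = 0
          · simp [hl]
          · rw [← Finset.mul_sum, st2 l hl, mul_zero]
  have hT2 : ∀ l, 0 ≤ ∑ i, r i * (Wstar.mulVec (X i) l)^2 := by
    intro l
    have := hG (fun j => Wstar l j)
    have heq : ∀ i, (∑ j, Wstar l j * X i j) = Wstar.mulVec (X i) l := fun i => (mulVec_eq _ _ _).symm
    calc (0:ℝ) ≤ ∑ i, r i * (∑ j, Wstar l j * X i j)^2 := this
      _ = ∑ i, r i * (Wstar.mulVec (X i) l)^2 :=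
          Finset.sum_congr rfl fun i _ => by rw [heq i]
  have hsum : ∑ i, r i^2 ≤ 0 := by
    have hexp : ∑ i, r i^2 = ∑ i, r i * (∑ l, v l * (W.mulVec (X i) l)^2)
        - ∑ l, vstar l * ∑ i, r i * (Wstar.mulVec (X i) l)^2 := by
      have h1 : ∑ i, r i^2 = ∑ i, (r i * (∑ l, v l * (W.mulVec (X i) l)^2)
          - ∑ l, vstar l * (r i * (Wstar.mulVec (X i) l)^2)) := by
        refine Finset.sum_congr rfl fun i _ => ?_
        rw [sq]
        nth_rewrite 2 [hr i]
        rw [mul_sub]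
        congr 1
        rw [Finset.mul_sum]
        exact Finset.sum_congr rfl fun l _ => by ring
      rw [h1, Finset.sum_sub_distrib]
      congr 1
      rw [Finset.sum_comm]
      exact Finset.sum_congr rfl fun l _ => (Finset.mul_sum _ _ _).symm
    rw [hexp, hT1]
    have : 0 ≤ ∑ l, vstar l * ∑ i, r i * (Wstar.mulVec (X i) l)^2 :=
      Finset.sum_nonneg fun l _ => mul_nonneg (hvs l) (hT2 l)
    linarith
  have h0 : ∑ i, r i^2 = 0 :=
    le_antisymm hsum (Finset.sum_nonneg fun i _ => sq_nonneg _)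
  intro i
  have := (Finset.sum_eq_zero_iff_of_nonneg fun i _ => sq_nonneg (r i)).mp h0 i (Finset.mem_univ i)
  exact pow_eq_zero_iff two_ne_zero |>.mp this

lemma mulVec_eq' (W : Matrix (Fin k) (Fin d) ℝ) (x : Fin d → ℝ) (l : Fin k) :
    W.mulVec x l = ∑ j, W l j * x j := rfl

example (W U : Matrix (Fin k) (Fin d) ℝ) (t : ℝ) (l : Fin k) (j : Fin d) :
    (W + t • U) l j = W l j + t * U l j := by
  simp [Matrix.add_apply, Matrix.smul_apply]

example (l : Fin k) (j : Fin d) :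
    ContDiff ℝ (⊤ : ℕ∞) (fun W : Matrix (Fin k) (Fin d) ℝ => W l j) := by
  let φ : Matrix (Fin k) (Fin d) ℝ →ₗ[ℝ] ℝ :=
    { toFun := fun W => W l j, map_add' := fun a b => rfl, map_smul' := fun m a => rfl }
  exact (LinearMap.toContinuousLinearMap φ).contDiff

lemma loss_contDiff (X : Fin n → Fin d → ℝ) (v : Fin k → ℝ) (y : Fin n → ℝ) (c : ℝ) :
    ContDiff ℝ (⊤ : ℕ∞) (fun W : Matrix (Fin k) (Fin d) ℝ =>
      c * ∑ i, ((∑ l, v l * (W.mulVec (X i) l)^2) - y i)^2) := by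
  have hentry : ∀ (l : Fin k) (j : Fin d),
      ContDiff ℝ (⊤ : ℕ∞) (fun W : Matrix (Fin k) (Fin d) ℝ => W l j) := by
    intro l j
    let φ : Matrix (Fin k) (Fin d) ℝ →ₗ[ℝ] ℝ :=
      { toFun := fun W => W l j, map_add' := fun a b => rfl, map_smul' := fun m a => rfl }
    exact (LinearMap.toContinuousLinearMap φ).contDiff
  have hmv : ∀ (i : Fin n) (l : Fin k),
      ContDiff ℝ (⊤ : ℕ∞) (fun W : Matrix (Fin k) (Fin d) ℝ => W.mulVec (X i) l) := by
    intro i l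
    have heq : (fun W : Matrix (Fin k) (Fin d) ℝ => W.mulVec (X i) l)
        = fun W => ∑ j, W l j * X i j := funext fun W => mulVec_eq' W (X i) l
    rw [heq]
    exact ContDiff.sum fun j _ => (hentry l j).mul contDiff_const
  refine contDiff_const.mul (ContDiff.sum fun i _ => ?_)
  exact ((ContDiff.sum fun l _ => contDiff_const.mul ((hmv i l).pow 2)).sub contDiff_const).pow 2

lemma loss_quartic (X : Fin n → Fin d → ℝ) (v : Fin k → ℝ) (y : Fin n → ℝ) (c : ℝ)
    (W U : Matrix (Fin k) (Fin d) ℝ) (t : ℝ) :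
    c * ∑ i, ((∑ l, v l * ((W + t • U).mulVec (X i) l)^2) - y i)^2
    = c * ∑ i, ((∑ l, v l * (W.mulVec (X i) l)^2) - y i)^2
      + (c * ∑ i, 4*(((∑ l, v l * (W.mulVec (X i) l)^2) - y i)
            * (∑ l, v l * W.mulVec (X i) l * U.mulVec (X i) l)))*t
      + (c * ∑ i, (4*(∑ l, v l * W.mulVec (X i) l * U.mulVec (X i) l)^2
            + 2*((∑ l, v l * (W.mulVec (X i) l)^2) - y i)
                * (∑ l, v l * (U.mulVec (X i) l)^2)))*t^2
      + (c * ∑ i, 4*((∑ l, v l * W.mulVec (X i) l * U.mulVec (X i) l)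
            * (∑ l, v l * (U.mulVec (X i) l)^2)))*t^3
      + (c * ∑ i, (∑ l, v l * (U.mulVec (X i) l)^2)^2)*t^4 := by
  have hmv : ∀ (x : Fin d → ℝ) (l : Fin k),
      (W + t • U).mulVec x l = W.mulVec x l + t * U.mulVec x l := by
    intro x l
    simp only [mulVec_eq', Matrix.add_apply, Matrix.smul_apply, smul_eq_mul, add_mul,
      Finset.sum_add_distrib, Finset.mul_sum, mul_assoc]
  have hres : ∀ i, ((∑ l, v l * ((W + t • U).mulVec (X i) l)^2) - y i)
      = ((∑ l, v l * (W.mulVec (X i) l)^2) - y i)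
        + (2*t) * (∑ l, v l * W.mulVec (X i) l * U.mulVec (X i) l)
        + t^2 * (∑ l, v l * (U.mulVec (X i) l)^2) := by
    intro i
    have h1 : ∀ l, v l * ((W + t • U).mulVec (X i) l)^2
        = v l * (W.mulVec (X i) l)^2
          + (2*t) * (v l * W.mulVec (X i) l * U.mulVec (X i) l)
          + t^2 * (v l * (U.mulVec (X i) l)^2) := fun l => by rw [hmv]; ring
    rw [Finset.sum_congr rfl fun l _ => h1 l, Finset.sum_add_distrib, Finset.sum_add_distrib,
      ← Finset.mul_sum, ← Finset.mul_sum]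
    ring
  have key : ∀ i, ((∑ l, v l * ((W + t • U).mulVec (X i) l)^2) - y i)^2
      = ((∑ l, v l * (W.mulVec (X i) l)^2) - y i)^2
        + (4*(((∑ l, v l * (W.mulVec (X i) l)^2) - y i)
            * (∑ l, v l * W.mulVec (X i) l * U.mulVec (X i) l)))*t
        + ((4*(∑ l, v l * W.mulVec (X i) l * U.mulVec (X i) l)^2
            + 2*((∑ l, v l * (W.mulVec (X i) l)^2) - y i)
                * (∑ l, v l * (U.mulVec (X i) l)^2)))*t^2
        + (4*((∑ l, v l * W.mulVec (X i) l * U.mulVec (X i) l)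
            * (∑ l, v l * (U.mulVec (X i) l)^2)))*t^3
        + ((∑ l, v l * (U.mulVec (X i) l)^2)^2)*t^4 := by
    intro i
    rw [hres i]
    ring
  rw [Finset.sum_congr rfl fun i _ => key i]
  simp only [Finset.sum_add_distrib, ← Finset.sum_mul]
  ring


lemma mulVec_eq'' (W : Matrix (Fin k) (Fin d) ℝ) (x : Fin d → ℝ) (l : Fin k) :
    W.mulVec x l = ∑ j, W l j * x j := rfl

lemma exists_zero (v vstar : Fin k → ℝ) (Wstar : Matrix (Fin k) (Fin d) ℝ)
    (hv : ∀ l, 0 ≤ v l) (hvs : ∀ l, 0 ≤ vstar l)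
    (hcard : d ≤ (Finset.univ.filter fun l => v l ≠ 0).card) :
    ∃ W : Matrix (Fin k) (Fin d) ℝ, ∀ x : Fin d → ℝ,
      ∑ l, v l * (W.mulVec x l)^2 = ∑ l, vstar l * (Wstar.mulVec x l)^2 := by
  classical
  obtain ⟨t, hts, htc⟩ := Finset.exists_subset_card_eq hcard
  let e : Fin d → Fin k := fun p => ((t.orderIsoOfFin htc) p : Fin k)
  have he_inj : Function.Injective e := fun p q h =>
    (t.orderIsoOfFin htc).injective (Subtype.ext h)
  have he_mem : ∀ p, v (e p) ≠ 0 := by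
    intro p
    have h1 : (e p) ∈ t := ((t.orderIsoOfFin htc) p).2
    have h2 := hts h1
    simpa using (Finset.mem_filter.mp h2).2
  have hvpos : ∀ p, 0 < v (e p) := fun p => lt_of_le_of_ne (hv _) (Ne.symm (he_mem p))
  set A : Matrix (Fin k) (Fin d) ℝ :=
    Matrix.of (fun l j => Real.sqrt (vstar l) * Wstar l j) with hA
  set P : Matrix (Fin d) (Fin d) ℝ := Aᴴ * A with hP
  have hPsd : P.PosSemidef := Matrix.posSemidef_conjTranspose_mul_self A
  set Q : Matrix (Fin d) (Fin d) ℝ := hPsd.sqrt with hQ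
  have hQQ : Q * Q = P := by
    have hU := Unitary.star_mul_self_of_mem hPsd.1.eigenvectorUnitary.2
    have hspec := hPsd.1.spectral_theorem
    rw [Unitary.conjStarAlgAut_apply] at hspec
    simp only [hQ, Matrix.PosSemidef.sqrt]
    conv_rhs => rw [hspec]
    set U := (hPsd.1.eigenvectorUnitary : Matrix (Fin d) (Fin d) ℝ)
    rw [show U * diagonal (Real.sqrt ∘ hPsd.1.eigenvalues) * star U *
        (U * diagonal (Real.sqrt ∘ hPsd.1.eigenvalues) * star U)
        = U * (diagonal (Real.sqrt ∘ hPsd.1.eigenvalues) * (star U * U) *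
          diagonal (Real.sqrt ∘ hPsd.1.eigenvalues)) * star U by simp only [mul_assoc],
      hU, mul_one, diagonal_mul_diagonal]
    congr 3
    funext i
    simp [Real.mul_self_sqrt (hPsd.eigenvalues_nonneg i)]
  have hQsym : Qᵀ = Q := by
    simp only [hQ, Matrix.PosSemidef.sqrt, Matrix.transpose_mul, Matrix.diagonal_transpose,
      Matrix.star_eq_conjTranspose, Matrix.conjTranspose_eq_transpose_of_trivial,
      Matrix.transpose_transpose, mul_assoc]
  have hPentry : ∀ j j', P j j' = ∑ l, vstar l * (Wstar l j * Wstar l j') := by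
    intro j j'
    rw [hP, Matrix.mul_apply]
    refine Finset.sum_congr rfl fun l _ => ?_
    rw [Matrix.conjTranspose_apply]
    simp only [hA, Matrix.of_apply, star_trivial]
    rw [show Real.sqrt (vstar l) * Wstar l j * (Real.sqrt (vstar l) * Wstar l j')
        = (Real.sqrt (vstar l) * Real.sqrt (vstar l)) * (Wstar l j * Wstar l j') from by ring,
      Real.mul_self_sqrt (hvs l)]
  have hQentry : ∀ j j', (∑ p, Q p j * Q p j') = P j j' := by
    intro j j'
    have h1 : (∑ p, Q p j * Q p j') = (Qᵀ * Q) j j' := by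
      rw [Matrix.mul_apply]
      exact Finset.sum_congr rfl fun p _ => by rw [Matrix.transpose_apply]
    rw [h1, hQsym, hQQ]
  set W : Matrix (Fin k) (Fin d) ℝ :=
    Matrix.of (fun l j => ∑ p, if e p = l then (1/Real.sqrt (v l)) * Q p j else 0) with hW
  have hWe : ∀ p j, W (e p) j = (1/Real.sqrt (v (e p))) * Q p j := by
    intro p j
    show (∑ q, if e q = e p then (1/Real.sqrt (v (e p))) * Q q j else 0) = _
    rw [Finset.sum_eq_single p]
    · simp
    · intro q _ hq; simp [he_inj.ne hq]
    · intro h; exact absurd (Finset.mem_univ p) h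
  have hWout : ∀ l, (∀ p, e p ≠ l) → ∀ j, W l j = 0 := by
    intro l hl j
    show (∑ q, if e q = l then (1/Real.sqrt (v l)) * Q q j else 0) = 0
    exact Finset.sum_eq_zero fun q _ => by simp [hl q]
  refine ⟨W, fun x => ?_⟩
  have lhs1 : ∑ l, v l * (W.mulVec x l)^2 = ∑ p, (Q.mulVec x p)^2 := by
    have hall : ∑ l, v l * (W.mulVec x l)^2
        = ∑ l ∈ Finset.image e Finset.univ, v l * (W.mulVec x l)^2 := by
      refine (Finset.sum_subset (Finset.subset_univ _) fun l _ hl => ?_).symm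
      have hout : ∀ p, e p ≠ l := fun p hp =>
        hl (Finset.mem_image.mpr ⟨p, Finset.mem_univ p, hp⟩)
      have : W.mulVec x l = 0 := by
        rw [mulVec_eq'']
        exact Finset.sum_eq_zero fun j _ => by rw [hWout l hout j, zero_mul]
      rw [this]; ring
    have himg : ∑ l ∈ Finset.image e Finset.univ, v l * (W.mulVec x l)^2
        = ∑ p, v (e p) * (W.mulVec x (e p))^2 := Finset.sum_image fun a _ b _ h => he_inj h
    rw [hall, himg]
    refine Finset.sum_congr rfl fun p _ => ?_
    have hmv : W.mulVec x (e p) = (1/Real.sqrt (v (e p))) * Q.mulVec x p := by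
      rw [mulVec_eq'', mulVec_eq'', Finset.mul_sum]
      exact Finset.sum_congr rfl fun j _ => by rw [hWe p j]; ring
    rw [hmv]
    have hs : Real.sqrt (v (e p)) * Real.sqrt (v (e p)) = v (e p) := Real.mul_self_sqrt (hv _)
    have hsne : Real.sqrt (v (e p)) ≠ 0 := by
      intro h0; rw [h0, mul_zero] at hs; exact he_mem p hs.symm
    field_simp
    rw [show Real.sqrt (v (e p)) ^ 2 = v (e p) from by rw [sq]; exact hs]
  have expand : ∀ (m : ℕ) (M : Matrix (Fin m) (Fin d) ℝ) (c : Fin m → ℝ),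
      ∑ p, c p * (M.mulVec x p)^2 = ∑ j, ∑ j', (x j * x j') * ∑ p, c p * (M p j * M p j') := by
    intro m M c
    calc ∑ p, c p * (M.mulVec x p)^2
        = ∑ p, ∑ j, ∑ j', (x j * x j') * (c p * (M p j * M p j')) := by
          refine Finset.sum_congr rfl fun p _ => ?_
          rw [mulVec_eq'', sq, Finset.sum_mul_sum]
          rw [Finset.mul_sum]
          refine Finset.sum_congr rfl fun j _ => ?_
          rw [Finset.mul_sum]
          exact Finset.sum_congr rfl fun j' _ => by ring
      _ = ∑ j, ∑ p, ∑ j', (x j * x j') * (c p * (M p j * M p j')) := Finset.sum_comm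
      _ = ∑ j, ∑ j', ∑ p, (x j * x j') * (c p * (M p j * M p j')) :=
          Finset.sum_congr rfl fun j _ => Finset.sum_comm
      _ = ∑ j, ∑ j', (x j * x j') * ∑ p, c p * (M p j * M p j') :=
          Finset.sum_congr rfl fun j _ => Finset.sum_congr rfl fun j' _ =>
            (Finset.mul_sum _ _ _).symm
  have lhs2 : ∑ p, (Q.mulVec x p)^2
      = ∑ j, ∑ j', (x j * x j') * ∑ p, Q p j * Q p j' := by
    have h := expand d Q (fun _ => 1)
    simpa using h
  have rhs2 : ∑ l, vstar l * (Wstar.mulVec x l)^2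
      = ∑ j, ∑ j', (x j * x j') * ∑ l, vstar l * (Wstar l j * Wstar l j') :=
    expand k Wstar vstar
  rw [lhs1, lhs2, rhs2]
  refine Finset.sum_congr rfl fun j _ => Finset.sum_congr rfl fun j' _ => ?_
  rw [hQentry j j', hPentry j j']


lemma quad_eq (v : Fin k → ℝ) (W : Matrix (Fin k) (Fin d) ℝ) (x : Fin d → ℝ) :
    x ⬝ᵥ (Wᵀ * Matrix.diagonal v * W).mulVec x = ∑ l, v l * (W.mulVec x l)^2 := by
  rw [← Matrix.mulVec_mulVec, ← Matrix.mulVec_mulVec, Matrix.dotProduct_mulVec,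
    Matrix.vecMul_transpose]
  simp only [dotProduct, Matrix.mulVec_diagonal]
  exact Finset.sum_congr rfl fun l _ => by ring

lemma main_pos (hd : 0 < d) (hdn : d ≤ n) (X : Fin n → Fin d → ℝ)
    (v vstar : Fin k → ℝ) (Wstar : Matrix (Fin k) (Fin d) ℝ)
    (hv : ∀ l, 0 ≤ v l) (hvs : ∀ l, 0 ≤ vstar l)
    (hcard : d ≤ (Finset.univ.filter fun l => v l ≠ 0).card)
    (L : Matrix (Fin k) (Fin d) ℝ → ℝ)
    (hL : ∀ W, L W = (1/(2*(n:ℝ))) * ∑ i, ((∑ l, v l * (W.mulVec (X i) l)^2)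
        - ∑ l, vstar l * (Wstar.mulVec (X i) l)^2)^2) :
    (∀ W : Matrix (Fin k) (Fin d) ℝ,
        fderiv ℝ L W = 0 →
        (∀ U : Matrix (Fin k) (Fin d) ℝ, 0 ≤ iteratedFDeriv ℝ 2 L W ![U, U]) →
        (∀ W' : Matrix (Fin k) (Fin d) ℝ, L W ≤ L W') ∧ L W = 0) ∧
    (∀ W : Matrix (Fin k) (Fin d) ℝ, IsLocalMin L W →
        ∀ W' : Matrix (Fin k) (Fin d) ℝ, L W ≤ L W') ∧
    (∀ Ws : Matrix (Fin k) (Fin d) ℝ, fderiv ℝ L Ws = 0 → ¬ IsLocalMin L Ws →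
        ∃ U : Matrix (Fin k) (Fin d) ℝ, iteratedFDeriv ℝ 2 L Ws ![U, U] < 0) ∧
    (∃ W : Matrix (Fin k) (Fin d) ℝ, L W = 0) := by
  classical
  have hn : 0 < n := lt_of_lt_of_le hd hdn
  set c : ℝ := 1/(2*(n:ℝ)) with hc
  have hnR : (0:ℝ) < (n:ℝ) := by exact_mod_cast hn
  have hcpos : 0 < c := by rw [hc]; positivity
  set y : Fin n → ℝ := fun i => ∑ l, vstar l * (Wstar.mulVec (X i) l)^2 with hy
  have hLeq : L = fun W => c * ∑ i, ((∑ l, v l * (W.mulVec (X i) l)^2) - y i)^2 :=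
    funext fun W => hL W
  have hCD : ContDiff ℝ (⊤ : ℕ∞) L := by rw [hLeq]; exact loss_contDiff X v y c
  have hLnn : ∀ W, 0 ≤ L W := by
    intro W
    rw [hLeq]
    exact mul_nonneg (le_of_lt hcpos) (Finset.sum_nonneg fun i _ => sq_nonneg _)
  set R : Matrix (Fin k) (Fin d) ℝ → Fin n → ℝ :=
    fun W i => (∑ l, v l * (W.mulVec (X i) l)^2) - y i with hR
  set A : Matrix (Fin k) (Fin d) ℝ → Matrix (Fin k) (Fin d) ℝ → Fin n → ℝ :=
    fun W U i => ∑ l, v l * W.mulVec (X i) l * U.mulVec (X i) l with hA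
  set B : Matrix (Fin k) (Fin d) ℝ → Fin n → ℝ :=
    fun U i => ∑ l, v l * (U.mulVec (X i) l)^2 with hB
  have hexp : ∀ (W U : Matrix (Fin k) (Fin d) ℝ) (t : ℝ),
      L (W + t • U) = L W + (c * ∑ i, 4*(R W i * A W U i))*t
        + (c * ∑ i, (4*(A W U i)^2 + 2*(R W i)*(B U i)))*t^2
        + (c * ∑ i, 4*((A W U i)*(B U i)))*t^3
        + (c * ∑ i, (B U i)^2)*t^4 := by
    intro W U t
    simp only [hLeq, hR, hA, hB]
    exact loss_quartic X v y c W U t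
  have hder : ∀ W U : Matrix (Fin k) (Fin d) ℝ,
      fderiv ℝ L W U = c * ∑ i, 4*(R W i * A W U i)
      ∧ iteratedFDeriv ℝ 2 L W ![U, U]
        = 2*(c * ∑ i, (4*(A W U i)^2 + 2*(R W i)*(B U i))) :=
    fun W U => bridge L hCD W U _ _ _ _ _ (hexp W U)
  have sosp : ∀ W : Matrix (Fin k) (Fin d) ℝ,
      (∀ U, c * ∑ i, 4*(R W i * A W U i) = 0) →
      (∀ U, 0 ≤ c * ∑ i, (4*(A W U i)^2 + 2*(R W i)*(B U i))) →
      ∀ i, R W i = 0 := by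
    intro W h1 h2
    refine core X v vstar Wstar hv hvs hcard W (R W) (fun i => by simp only [hR, hy]) ?_ ?_
    · intro U
      have hx := h1 U
      have h4 : (∑ i, 4*(R W i * A W U i)) = 0 := by
        rcases mul_eq_zero.mp hx with h | h
        · exact absurd h (ne_of_gt hcpos)
        · exact h
      have h5 : ∑ i, R W i * A W U i = 0 := by
        have he : (∑ i, 4*(R W i * A W U i)) = 4 * ∑ i, R W i * A W U i := by
          rw [Finset.mul_sum]
        rw [he] at h4
        linarith
      simpa only [hA] using h5
    · intro U
      have hx := h2 U
      have h6 : 0 ≤ ∑ i, (4*(A W U i)^2 + 2*(R W i)*(B U i)) := by nlinarith [hcpos, hx]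
      have h7 : ∑ i, (4*(A W U i)^2 + 2*(R W i)*(B U i))
          = 2 * ∑ i, (2*(A W U i)^2 + (R W i)*(B U i)) := by
        rw [Finset.mul_sum]
        exact Finset.sum_congr rfl fun i _ => by ring
      have h8 : 0 ≤ ∑ i, (2*(A W U i)^2 + (R W i)*(B U i)) := by
        rw [h7] at h6; linarith
      simpa only [hA, hB] using h8
  have hzeroOfR : ∀ W : Matrix (Fin k) (Fin d) ℝ, (∀ i, R W i = 0) → L W = 0 := by
    intro W h
    have hs : ∑ i, ((∑ l, v l * (W.mulVec (X i) l)^2) - y i)^2 = 0 :=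
      Finset.sum_eq_zero fun i _ => by
        have h2 : ((∑ l, v l * (W.mulVec (X i) l)^2) - y i) = 0 := by
          simpa only [hR] using h i
        rw [h2]; ring
    simp only [hLeq]
    rw [hs, mul_zero]
  refine ⟨?_, ?_, ?_, ?_⟩
  · intro W hfd hhess
    have h1 : ∀ U, c * ∑ i, 4*(R W i * A W U i) = 0 := by
      intro U
      have h := (hder W U).1
      rw [hfd] at h
      simpa using h.symm
    have h2 : ∀ U, 0 ≤ c * ∑ i, (4*(A W U i)^2 + 2*(R W i)*(B U i)) := by
      intro U
      have h := hhess U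
      rw [(hder W U).2] at h
      linarith
    have hz := hzeroOfR W (sosp W h1 h2)
    exact ⟨fun W' => hz ▸ hLnn W', hz⟩
  · intro W hloc W'
    have hquart : ∀ U : Matrix (Fin k) (Fin d) ℝ,
        c * ∑ i, 4*(R W i * A W U i) = 0
        ∧ 0 ≤ c * ∑ i, (4*(A W U i)^2 + 2*(R W i)*(B U i)) := by
      intro U
      have hcont : Continuous (fun t : ℝ => W + t • U) :=
        continuous_const.add (continuous_id.smul continuous_const)
      have htend : Filter.Tendsto (fun t : ℝ => W + t • U) (nhds 0) (nhds W) := by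
        have := hcont.tendsto 0
        simpa using this
      have hev : ∀ᶠ t in nhds (0:ℝ), L W ≤ L (W + t • U) := htend.eventually hloc
      have hmin : IsLocalMin (fun t : ℝ => L (W + t • U)) 0 := by
        refine Filter.Eventually.mono hev fun t ht => ?_
        simpa using ht
      have hfun : (fun t : ℝ => L (W + t • U))
          = fun t => L W + (c * ∑ i, 4*(R W i * A W U i))*t
            + (c * ∑ i, (4*(A W U i)^2 + 2*(R W i)*(B U i)))*t^2
            + (c * ∑ i, 4*((A W U i)*(B U i)))*t^3
            + (c * ∑ i, (B U i)^2)*t^4 := funext (hexp W U)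
      rw [hfun] at hmin
      exact quartic_localmin hmin
    have hz := hzeroOfR W (sosp W (fun U => (hquart U).1) (fun U => (hquart U).2))
    rw [hz]
    exact hLnn W'
  · intro Ws hfd hnot
    by_contra hno
    push_neg at hno
    have h1 : ∀ U, c * ∑ i, 4*(R Ws i * A Ws U i) = 0 := by
      intro U
      have h := (hder Ws U).1
      rw [hfd] at h
      simpa using h.symm
    have h2 : ∀ U, 0 ≤ c * ∑ i, (4*(A Ws U i)^2 + 2*(R Ws i)*(B U i)) := by
      intro U
      have h := hno U
      rw [(hder Ws U).2] at h
      linarith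
    have hz := hzeroOfR Ws (sosp Ws h1 h2)
    exact hnot (Filter.Eventually.of_forall fun W' => by rw [hz]; exact hLnn W')
  · obtain ⟨W, hW⟩ := exists_zero v vstar Wstar hv hvs hcard
    refine ⟨W, ?_⟩
    have hs : ∑ i, ((∑ l, v l * (W.mulVec (X i) l)^2) - y i)^2 = 0 :=
      Finset.sum_eq_zero fun i _ => by
        have h2 : ((∑ l, v l * (W.mulVec (X i) l)^2) - y i) = 0 := by
          rw [hW (X i)]
          simp only [hy]
          ring
        rw [h2]; ring
    simp only [hLeq]
    rw [hs, mul_zero]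

end Aux


/-- planted quadratic model, `k ≥ d`, `d ≤ n ≤ c d²`, `v*` with all nonzero entries
of one sign and `v` of the same sign with at least `d` nonzero entries.  For Lebesgue-almost
every data matrix: every second-order stationary point of the loss is a global minimizer with
loss value zero; all local minima are global, saddle points have a direction of strictly
negative curvature, and the global optimum value is zero. -/
theorem stmt2 : ∃ c : ℝ, 0 < c ∧
    ∀ (d k n : ℕ), 0 < d → d ≤ k → d ≤ n → (n : ℝ) ≤ c * (d : ℝ) ^ 2 →
    ∀ (vstar v : Fin k → ℝ) (Wstar : Matrix (Fin k) (Fin d) ℝ),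
      0 < sigmaMin Wstar →
      (((∀ l, 0 ≤ vstar l) ∧ ∀ l, 0 ≤ v l) ∨ ((∀ l, vstar l ≤ 0) ∧ ∀ l, v l ≤ 0)) →
      d ≤ (Finset.univ.filter fun l => v l ≠ 0).card →
    ∀ᵐ X ∂(volume : Measure (Fin n → Fin d → ℝ)),
      ∀ L : Matrix (Fin k) (Fin d) ℝ → ℝ,
      (∀ W : Matrix (Fin k) (Fin d) ℝ,
        L W = (1 / (2 * (n : ℝ))) *
          ∑ i, (X i ⬝ᵥ (Wᵀ * Matrix.diagonal v * W).mulVec (X i)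
                  - ∑ l, vstar l * (Wstar.mulVec (X i) l) ^ 2) ^ 2) →
      (∀ W : Matrix (Fin k) (Fin d) ℝ,
          fderiv ℝ L W = 0 →
          (∀ U : Matrix (Fin k) (Fin d) ℝ, 0 ≤ iteratedFDeriv ℝ 2 L W ![U, U]) →
          (∀ W' : Matrix (Fin k) (Fin d) ℝ, L W ≤ L W') ∧ L W = 0) ∧
      (∀ W : Matrix (Fin k) (Fin d) ℝ, IsLocalMin L W →
          ∀ W' : Matrix (Fin k) (Fin d) ℝ, L W ≤ L W') ∧
      (∀ Ws : Matrix (Fin k) (Fin d) ℝ, fderiv ℝ L Ws = 0 → ¬ IsLocalMin L Ws →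
          ∃ U : Matrix (Fin k) (Fin d) ℝ, iteratedFDeriv ℝ 2 L Ws ![U, U] < 0) ∧
      (∃ W : Matrix (Fin k) (Fin d) ℝ, L W = 0) := by
  classical
  refine ⟨1, one_pos, ?_⟩
  intro d k n hd hdk hdn hn2 vstar v Wstar hsig hsign hcard
  refine Filter.Eventually.of_forall fun X => ?_
  intro L hL
  have hL' : ∀ W : Matrix (Fin k) (Fin d) ℝ,
      L W = (1/(2*(n:ℝ))) * ∑ i, ((∑ l, v l * (W.mulVec (X i) l)^2)
        - ∑ l, vstar l * (Wstar.mulVec (X i) l)^2)^2 := by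
    intro W
    rw [hL W]
    congr 1
    refine Finset.sum_congr rfl fun i _ => ?_
    rw [quad_eq]
  rcases hsign with ⟨hvs, hv⟩ | ⟨hvs, hv⟩
  · exact main_pos hd hdn X v vstar Wstar hv hvs hcard L hL'
  · have hv' : ∀ l, 0 ≤ -v l := fun l => neg_nonneg.mpr (hv l)
    have hvs' : ∀ l, 0 ≤ -vstar l := fun l => neg_nonneg.mpr (hvs l)
    have hcard' : d ≤ (Finset.univ.filter fun l => -v l ≠ 0).card := by
      have hset : (Finset.univ.filter fun l => -v l ≠ 0)
          = (Finset.univ.filter fun l => v l ≠ 0) := by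
        refine Finset.filter_congr fun l _ => ?_
        simp [neg_eq_zero]
      rw [hset]
      exact hcard
    have hL'' : ∀ W : Matrix (Fin k) (Fin d) ℝ,
        L W = (1/(2*(n:ℝ))) * ∑ i, ((∑ l, (-v l) * (W.mulVec (X i) l)^2)
          - ∑ l, (-vstar l) * (Wstar.mulVec (X i) l)^2)^2 := by
      intro W
      rw [hL' W]
      congr 1
      refine Finset.sum_congr rfl fun i _ => ?_
      rw [show (∑ l, (-v l) * (W.mulVec (X i) l)^2)
          = -(∑ l, v l * (W.mulVec (X i) l)^2) from by
        rw [← Finset.sum_neg_distrib]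
        exact Finset.sum_congr rfl fun l _ => by ring]
      rw [show (∑ l, (-vstar l) * (Wstar.mulVec (X i) l)^2)
          = -(∑ l, vstar l * (Wstar.mulVec (X i) l)^2) from by
        rw [← Finset.sum_neg_distrib]
        exact Finset.sum_congr rfl fun l _ => by ring]
      ring
    exact main_pos hd hdn X (fun l => -v l) (fun l => -vstar l) Wstar hv' hvs' hcard' L hL''
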